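/- arXiv:0806.0303 — 4 statements merged into one kernel-verified Lean document; each statement's English description precedes it below -/
import Mathlib

section
/- Every linear automorphism T of the Z/2-vector space V = (Fin (g+1) → ZMod 2) that preserves the standard bilinear form ⟨x,y⟩ = ∑_{i=0}^{g} x_i y_i fixes the all-ones vector v = ∑_{i=0}^{g} e_i, i.e. T(v) = v. -/
/-- Every linear automorphism `T` of `V = Fin (g+1) → ZMod 2` preserving the standard
bilinear form `⟨x,y⟩ = ∑ i, x i * y i` fixes the all-ones vector `v = ∑ i, e i`. -/
theorem orth_fixes_all_ones (g : ℕ)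
    (T : (Fin (g + 1) → ZMod 2) ≃ₗ[ZMod 2] (Fin (g + 1) → ZMod 2))
    (hT : ∀ x y : Fin (g + 1) → ZMod 2, ∑ i, T x i * T y i = ∑ i, x i * y i) :
    T (∑ i, Pi.single i (1 : ZMod 2)) = ∑ i, Pi.single i (1 : ZMod 2) := by
  set v : Fin (g + 1) → ZMod 2 := ∑ i, Pi.single i (1 : ZMod 2) with hv
  have hvj : ∀ j, v j = 1 := by
    intro j
    simp [hv, Finset.sum_apply, Pi.single_apply]
  have hsq : ∀ a : ZMod 2, a * a = a := by decide
  funext j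
  have hx : T (T.symm (Pi.single j 1)) = Pi.single j 1 := T.apply_symm_apply _
  set x : Fin (g + 1) → ZMod 2 := T.symm (Pi.single j 1) with hxdef
  have h1 : ∑ i, T x i * T v i = ∑ i, x i * v i := hT x v
  have h2 : ∑ i, T x i * T x i = ∑ i, x i * x i := hT x x
  have e1 : ∑ i, T x i * T v i = T v j := by
    rw [hx]
    simp [Pi.single_apply]
  have e2 : ∑ i, x i * v i = ∑ i, x i := by
    apply Finset.sum_congr rfl
    intro i _
    rw [hvj i, mul_one]
  have e3 : ∑ i, x i * x i = ∑ i, x i := by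
    apply Finset.sum_congr rfl
    intro i _
    exact hsq _
  have e4 : ∑ i, T x i * T x i = 1 := by
    rw [hx]
    simp [Pi.single_apply, hsq]
  have : T v j = 1 := by
    rw [← e1, h1, e2, ← e3, ← h2, e4]
  rw [this, hvj j]
end

section
/- If two linear forms θ, θ' on V = (Fin (g+1) → ZMod 2) are in the same orbit under the right-composition action of O(V), i.e. θ' = θ ∘ T for some T ∈ O(V), then ∑_{i=0}^{g} θ(e_i) = ∑_{i=0}^{g} θ'(e_i) in ZMod 2. -/
/-- If two linear forms on `Fin (g+1) → ZMod 2` are in the same orbit under right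
composition by the orthogonal group, then they have the same sum of values on the
standard basis vectors. -/
theorem sum_on_basis_orbit_invariant (g : ℕ)
    (θ θ' : (Fin (g + 1) → ZMod 2) →ₗ[ZMod 2] ZMod 2)
    (T : (Fin (g + 1) → ZMod 2) ≃ₗ[ZMod 2] (Fin (g + 1) → ZMod 2))
    (hT : ∀ x y : Fin (g + 1) → ZMod 2, ∑ i, T x i * T y i = ∑ i, x i * y i)
    (h : ∀ x : Fin (g + 1) → ZMod 2, θ' x = θ (T x)) :
    ∑ i, θ (Pi.single i (1 : ZMod 2)) = ∑ i, θ' (Pi.single i (1 : ZMod 2)) := by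
  have sq : ∀ a : ZMod 2, a * a = a := by decide
  set u : Fin (g + 1) → ZMod 2 := fun _ => 1 with hu
  -- T fixes the all-ones vector
  have hTu : T u = u := by
    funext j
    set x : Fin (g + 1) → ZMod 2 := T.symm (Pi.single j 1) with hx
    have hTx : T x = Pi.single j 1 := T.apply_symm_apply _
    -- sum of x is 1
    have hsx : ∑ i, x i = 1 := by
      have h1 := hT x x
      rw [hTx] at h1
      have h2 : ∑ i, (Pi.single j 1 : Fin (g+1) → ZMod 2) i * (Pi.single j 1 : Fin (g+1) → ZMod 2) i = 1 := by
        simp [Pi.single_apply, Finset.sum_ite_eq']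
      rw [h2] at h1
      calc ∑ i, x i = ∑ i, x i * x i := by simp [sq]
        _ = 1 := h1.symm
    have h3 := hT u x
    rw [hTx] at h3
    have hl : ∑ i, T u i * (Pi.single j 1 : Fin (g+1) → ZMod 2) i = T u j := by
      simp [Pi.single_apply, Finset.sum_ite_eq']
    have hr : ∑ i, u i * x i = 1 := by
      simpa [hu] using hsx
    rw [hl, hr] at h3
    simpa [hu] using h3
  have hsum : ∀ φ : (Fin (g + 1) → ZMod 2) →ₗ[ZMod 2] ZMod 2,
      ∑ i, φ (Pi.single i (1 : ZMod 2)) = φ u := by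
    intro φ
    rw [← map_sum]
    congr 1
    funext j
    simp [Finset.sum_apply, Pi.single_apply, Finset.sum_ite_eq', hu]
  rw [hsum θ, hsum θ', h u, hTu]
end

section
/- Let g ≥ 2 and let θ, θ' be linear forms on V = (Fin (g+1) → ZMod 2), each distinct from the zero form θ₀ : x ↦ 0 and from the form θ₁ : x ↦ ∑_{i=0}^{g} x_i. Then θ and θ' lie in the same orbit under the right-composition action of O(V) (i.e. θ' = θ ∘ T for some T ∈ O(V)) if and only if ∑_{i=0}^{g} θ(e_i) = ∑_{i=0}^{g} θ'(e_i) in ZMod 2. -/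
/-!
A linear form is `x ↦ v ⬝ᵥ x` for a unique vector `v`, and composing it with an orthogonal `T`
replaces `v` by `T⁻¹ v`; so the question is about orbits of vectors. Over `ZMod 2` one has
`v ⬝ᵥ v = ∑ i, v i`, the parity of the weight of `v`, which is therefore invariant.
Conversely, if `u` has weight 4 then `u ⬝ᵥ u = 0` and the transvection
`x ↦ x + (u ⬝ᵥ x) • u` is orthogonal; taking three coordinates of `u` in the support of `v`
and one outside lowers the weight of `v` by 2. Hence every `v ≠ 0, 1` is carried to a vector
of weight 1 or 2 of the same parity, and vectors of equal weight differ by a permutation of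
coordinates.
-/

open Matrix Finset MulAction
open scoped symmDiff Pointwise

variable {R n : Type*}

section Orthogonal

variable [Fintype n] [CommRing R]

variable (R n) in
def dotOrthogonalGroup : Subgroup ((n → R) ≃ₗ[R] (n → R)) where
  carrier := {T | ∀ x y, T x ⬝ᵥ T y = x ⬝ᵥ y}
  mul_mem' hS hT x y := (hS _ _).trans (hT x y)
  one_mem' _ _ := rfl
  inv_mem' {T} hT x y := by simpa using (hT (T.symm x) (T.symm y)).symm

theorem symm_mem_dotOrthogonalGroup {T : (n → R) ≃ₗ[R] (n → R)}
    (hT : T ∈ dotOrthogonalGroup R n) : T.symm ∈ dotOrthogonalGroup R n :=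
  inv_mem hT

theorem mem_orbit_dotOrthogonalGroup {v w : n → R} :
    w ∈ orbit (dotOrthogonalGroup R n) v ↔ ∃ T ∈ dotOrthogonalGroup R n, T v = w := by
  simp [mem_orbit_iff, Subgroup.smul_def, LinearEquiv.smul_def]

theorem funCongrLeft_mem_dotOrthogonalGroup (σ : Equiv.Perm n) :
    LinearEquiv.funCongrLeft R R σ ∈ dotOrthogonalGroup R n := fun x y =>
  Equiv.sum_comp σ fun i => x i * y i

theorem dotProduct_apply_eq_symm_dotProduct {T : (n → R) ≃ₗ[R] (n → R)}
    (hT : T ∈ dotOrthogonalGroup R n) (v x : n → R) : v ⬝ᵥ T x = T.symm v ⬝ᵥ x := by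
  simpa using hT (T.symm v) x

variable [DecidableEq n] [CharP R 2]

def isotropicTransvection (u : n → R) (hu : u ⬝ᵥ u = 0) : (n → R) ≃ₗ[R] (n → R) :=
  LinearEquiv.ofInvolutive (LinearMap.id + (dotProductEquiv R n u).smulRight u) fun x => by
    simp [dotProduct_add, dotProduct_smul, hu, add_assoc, ← add_smul, CharTwo.add_self_eq_zero]

theorem isotropicTransvection_apply (u : n → R) (hu : u ⬝ᵥ u = 0) (x : n → R) :
    isotropicTransvection u hu x = x + (u ⬝ᵥ x) • u :=
  rfl

theorem isotropicTransvection_mem (u : n → R) (hu : u ⬝ᵥ u = 0) :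
    isotropicTransvection u hu ∈ dotOrthogonalGroup R n := fun x y => by
  simp only [isotropicTransvection_apply, add_dotProduct, dotProduct_add, smul_dotProduct,
    dotProduct_smul, hu, smul_eq_mul, mul_zero, add_zero, dotProduct_comm x u]
  rw [mul_comm (u ⬝ᵥ y), add_assoc, CharTwo.add_self_eq_zero, add_zero]

theorem add_mem_orbit_dotOrthogonalGroup {u v : n → R} (hu : u ⬝ᵥ u = 0)
    (hv : u ⬝ᵥ v = 1) :
    v + u ∈ orbit (dotOrthogonalGroup R n) v :=
  mem_orbit_dotOrthogonalGroup.2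
    ⟨_, isotropicTransvection_mem u hu, by rw [isotropicTransvection_apply, hv, one_smul]⟩

end Orthogonal

theorem dotProduct_self_eq_sum [Fintype n] (v : n → ZMod 2) : v ⬝ᵥ v = ∑ i, v i :=
  Finset.sum_congr rfl fun i _ => (by decide : ∀ a : ZMod 2, a * a = a) (v i)

theorem sum_eq_of_mem_orbit_dotOrthogonalGroup [Fintype n] {v w : n → ZMod 2}
    (h : w ∈ orbit (dotOrthogonalGroup (ZMod 2) n) v) : ∑ i, w i = ∑ i, v i := by
  obtain ⟨T, hT, rfl⟩ := mem_orbit_dotOrthogonalGroup.1 h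
  rw [← dotProduct_self_eq_sum, hT, dotProduct_self_eq_sum]

theorem symmDiff_insert_eq_insert_sdiff [DecidableEq n] {s A : Finset n} {d : n} (hA : A ⊆ s)
    (hd : d ∉ s) :
    s ∆ insert d A = insert d (s \ A) := by
  ext i
  by_cases hi : i = d
  · subst hi; simp [mem_symmDiff, hd]
  · have := @hA i; simp [mem_symmDiff, hi]; tauto

section CharVec

variable [DecidableEq n]

def charVec (s : Finset n) : n → ZMod 2 := fun i => if i ∈ s then 1 else 0

theorem charVec_eq_zero_iff {s : Finset n} : charVec s = 0 ↔ s = ∅ := by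
  simp [funext_iff, charVec, eq_empty_iff_forall_notMem]

theorem charVec_add_charVec (s t : Finset n) : charVec s + charVec t = charVec (s ∆ t) := by
  funext i
  by_cases hs : i ∈ s <;> by_cases ht : i ∈ t <;> simp [charVec, mem_symmDiff, hs, ht]
  decide

variable [Fintype n]

theorem exists_charVec_eq (v : n → ZMod 2) : ∃ s, charVec s = v := by
  refine ⟨({i | v i = 1} : Finset n), funext fun i => ?_⟩
  rcases (by decide : ∀ a : ZMod 2, a = 0 ∨ a = 1) (v i) with h | h <;> simp [charVec, h]

theorem charVec_eq_one_iff {s : Finset n} : charVec s = 1 ↔ s = univ := by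
  simp [funext_iff, charVec, eq_univ_iff_forall]

theorem sum_charVec (s : Finset n) : ∑ i, charVec s i = #s := by
  simp [charVec]

theorem charVec_dotProduct_charVec (s t : Finset n) : charVec s ⬝ᵥ charVec t = #(s ∩ t) := by
  rw [← sum_charVec]
  refine Finset.sum_congr rfl fun i _ => ?_
  by_cases hs : i ∈ s <;> by_cases ht : i ∈ t <;> simp [charVec, hs, ht]

theorem charVec_mem_orbit_of_card_eq {s t : Finset n} (h : #s = #t) :
    charVec t ∈ orbit (dotOrthogonalGroup (ZMod 2) n) (charVec s) := by
  obtain ⟨σ, hσ⟩ := (Set.powersetCard.isPretransitive (α := n) (n := #s)).exists_smul_eq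
    ⟨t, h.symm⟩ ⟨s, rfl⟩
  have hσ : σ • t = s := by simpa using congrArg Subtype.val hσ
  refine mem_orbit_dotOrthogonalGroup.2
    ⟨_, funCongrLeft_mem_dotOrthogonalGroup σ, funext fun i => ?_⟩
  have hmem : σ i ∈ σ • t ↔ i ∈ t := Finset.smul_mem_smul_finset_iff σ
  simp [charVec, ← hσ, hmem]

theorem exists_charVec_mem_orbit_card_add_two {s : Finset n} (h₃ : 3 ≤ #s) (hs : s ≠ univ) :
    ∃ s', charVec s' ∈ orbit (dotOrthogonalGroup (ZMod 2) n) (charVec s) ∧ #s' + 2 = #s := by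
  obtain ⟨A, hAs, hA⟩ := exists_subset_card_eq h₃
  obtain ⟨d, hd⟩ : ∃ d, d ∉ s := by simpa [eq_univ_iff_forall] using hs
  have hdA : d ∉ A := fun h => hd (hAs h)
  have hu : charVec (insert d A) ⬝ᵥ charVec (insert d A) = 0 := by
    rw [charVec_dotProduct_charVec, inter_self, card_insert_of_notMem hdA, hA]; decide
  have hv : charVec (insert d A) ⬝ᵥ charVec s = 1 := by
    rw [charVec_dotProduct_charVec, insert_inter_of_notMem hd, inter_eq_left.2 hAs, hA]; decide
  refine ⟨insert d (s \ A), ?_, ?_⟩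
  · rw [← symmDiff_insert_eq_insert_sdiff hAs hd, ← charVec_add_charVec]
    exact add_mem_orbit_dotOrthogonalGroup hu hv
  · rw [card_insert_of_notMem (fun h => hd (mem_sdiff.1 h).1), card_sdiff_of_subset hAs, hA]
    omega

end CharVec

theorem orbit_charVec_eq_of_natCast_card_eq [DecidableEq n] [Fintype n] {s t : Finset n}
    (hs₀ : s.Nonempty) (hs₁ : s ≠ univ) (ht₀ : t.Nonempty) (ht₁ : t ≠ univ)
    (h : (#s : ZMod 2) = #t) :
    orbit (dotOrthogonalGroup (ZMod 2) n) (charVec s) =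
      orbit (dotOrthogonalGroup (ZMod 2) n) (charVec t) := by
  induction hk : #s + #t using Nat.strong_induction_on generalizing s t with
  | _ k ih =>
  wlog hts : #t ≤ #s generalizing s t
  · exact (this ht₀ ht₁ hs₀ hs₁ h.symm (by omega) (by omega)).symm
  by_cases hs₃ : 3 ≤ #s
  · obtain ⟨s', hs', hcard⟩ := exists_charVec_mem_orbit_card_add_two hs₃ hs₁
    have hs'₁ : s' ≠ univ := fun h => by
      have := card_le_univ s; rw [h, card_univ] at hcard; omega
    rw [← orbit_eq_iff.2 hs']
    refine ih (#s' + #t) (by omega) (card_pos.1 (by omega)) hs'₁ ht₀ ht₁ ?_ rfl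
    rw [← h, ← hcard]; push_cast; rw [(by decide : (2 : ZMod 2) = 0), add_zero]
  · have := hs₀.card_pos; have := ht₀.card_pos
    have hst : #s = #t := by
      interval_cases hs : #s <;> interval_cases ht : #t <;>
        first | rfl | exact absurd h (by decide)
    exact orbit_eq_iff.2 (charVec_mem_orbit_of_card_eq hst.symm)

theorem orbit_eq_orbit_iff_sum_eq [DecidableEq n] [Fintype n] {v w : n → ZMod 2}
    (hv₀ : v ≠ 0) (hv₁ : v ≠ 1) (hw₀ : w ≠ 0) (hw₁ : w ≠ 1) :
    orbit (dotOrthogonalGroup (ZMod 2) n) v = orbit (dotOrthogonalGroup (ZMod 2) n) w ↔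
      ∑ i, v i = ∑ i, w i := by
  refine ⟨fun h => sum_eq_of_mem_orbit_dotOrthogonalGroup (orbit_eq_iff.1 h), fun h => ?_⟩
  obtain ⟨s, rfl⟩ := exists_charVec_eq v
  obtain ⟨t, rfl⟩ := exists_charVec_eq w
  rw [sum_charVec, sum_charVec] at h
  simp only [ne_eq, charVec_eq_zero_iff, charVec_eq_one_iff, ← nonempty_iff_ne_empty] at *
  exact orbit_charVec_eq_of_natCast_card_eq hv₀ hv₁ hw₀ hw₁ h

theorem exists_mem_dotOrthogonalGroup_comp_iff [CommRing R] [DecidableEq n] [Fintype n]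
    (θ θ' : Module.Dual R (n → R)) :
    (∃ T ∈ dotOrthogonalGroup R n, ∀ x, θ' x = θ (T x)) ↔
      (dotProductEquiv R n).symm θ' ∈
        orbit (dotOrthogonalGroup R n) ((dotProductEquiv R n).symm θ) := by
  obtain ⟨v, rfl⟩ := (dotProductEquiv R n).surjective θ
  obtain ⟨v', rfl⟩ := (dotProductEquiv R n).surjective θ'
  simp only [LinearEquiv.symm_apply_apply, dotProductEquiv_apply_apply,
    mem_orbit_dotOrthogonalGroup]
  constructor
  · rintro ⟨T, hT, hθ⟩
    exact ⟨T.symm, symm_mem_dotOrthogonalGroup hT, dotProduct_eq _ _ fun x => by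
      rw [hθ, dotProduct_apply_eq_symm_dotProduct hT]⟩
  · rintro ⟨S, hS, rfl⟩
    refine ⟨S.symm, symm_mem_dotOrthogonalGroup hS, fun x => ?_⟩
    rw [dotProduct_apply_eq_symm_dotProduct (symm_mem_dotOrthogonalGroup hS), S.symm_symm]

theorem orbit_iff_sum_on_basis_general (g : ℕ)
    (θ θ' : (Fin (g + 1) → ZMod 2) →ₗ[ZMod 2] ZMod 2)
    (hθ0 : θ ≠ 0)
    (hθ1 : ⇑θ ≠ fun x : Fin (g + 1) → ZMod 2 => ∑ i, x i)
    (hθ'0 : θ' ≠ 0)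
    (hθ'1 : ⇑θ' ≠ fun x : Fin (g + 1) → ZMod 2 => ∑ i, x i) :
    (∃ T : (Fin (g + 1) → ZMod 2) ≃ₗ[ZMod 2] (Fin (g + 1) → ZMod 2),
        (∀ x y : Fin (g + 1) → ZMod 2, ∑ i, T x i * T y i = ∑ i, x i * y i) ∧
        ∀ x : Fin (g + 1) → ZMod 2, θ' x = θ (T x)) ↔
      ∑ i, θ (Pi.single i (1 : ZMod 2)) = ∑ i, θ' (Pi.single i (1 : ZMod 2)) := by
  let e := dotProductEquiv (ZMod 2) (Fin (g + 1))
  have coeffs_ne_one {φ : Module.Dual (ZMod 2) (Fin (g + 1) → ZMod 2)}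
      (hφ : ⇑φ ≠ fun x => ∑ i, x i) : e.symm φ ≠ 1 := fun h => hφ <| by
    ext x; rw [← e.apply_symm_apply φ, h]; exact one_dotProduct x
  refine (exists_mem_dotOrthogonalGroup_comp_iff θ θ').trans ?_
  rw [← orbit_eq_iff, orbit_eq_orbit_iff_sum_eq (by simpa) (coeffs_ne_one hθ'1) (by simpa)
    (coeffs_ne_one hθ1), eq_comm]
  rfl

/-- For `g ≥ 2`, two linear forms on `Fin (g+1) → ZMod 2`, each distinct from the zero
form `θ₀` and from `θ₁ : x ↦ ∑ i, x i`, are in the same orbit under right composition by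
the orthogonal group if and only if they have the same sum of values on the standard
basis vectors. -/
theorem orbit_iff_sum_on_basis (g : ℕ) (hg : 2 ≤ g)
    (θ θ' : (Fin (g + 1) → ZMod 2) →ₗ[ZMod 2] ZMod 2)
    (hθ0 : θ ≠ 0)
    (hθ1 : ⇑θ ≠ fun x : Fin (g + 1) → ZMod 2 => ∑ i, x i)
    (hθ'0 : θ' ≠ 0)
    (hθ'1 : ⇑θ' ≠ fun x : Fin (g + 1) → ZMod 2 => ∑ i, x i) :
    (∃ T : (Fin (g + 1) → ZMod 2) ≃ₗ[ZMod 2] (Fin (g + 1) → ZMod 2),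
        (∀ x y : Fin (g + 1) → ZMod 2, ∑ i, T x i * T y i = ∑ i, x i * y i) ∧
        ∀ x : Fin (g + 1) → ZMod 2, θ' x = θ (T x)) ↔
      ∑ i, θ (Pi.single i (1 : ZMod 2)) = ∑ i, θ' (Pi.single i (1 : ZMod 2)) :=
  orbit_iff_sum_on_basis_general g θ θ' hθ0 hθ1 hθ'0 hθ'1
end

section
/- Let g ≥ 1, W = (Fin g → ZMod 2) with all-ones vector e = v_1 + ⋯ + v_g, and let H₀ = {x ∈ W : x ≠ 0, x ≠ e, ⟨x,e⟩ = 0}. The orthogonal group O(W) acts transitively on H₀: for all x, x' ∈ H₀ there exists T ∈ O(W) with T(x) = x'. -/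
section Aux

variable {g : ℕ}

/-- The dot product with `u` as a linear map. -/
private def dotL (u : Fin g → ZMod 2) : (Fin g → ZMod 2) →ₗ[ZMod 2] ZMod 2 where
  toFun z := ∑ i, z i * u i
  map_add' a b := by simp [add_mul, Finset.sum_add_distrib]
  map_smul' c a := by simp [Finset.mul_sum, mul_assoc]

private lemma dotL_apply (u z : Fin g → ZMod 2) : dotL u z = ∑ i, z i * u i := rfl

private lemma zmod2_sq (a : ZMod 2) : a * a = a := by revert a; decide

private lemma zmod2_cases (a : ZMod 2) : a = 0 ∨ a = 1 := by revert a; decide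

/-- The transvection `z ↦ z + ⟨z,u⟩ • u` for an isotropic vector `u`. -/
private def transv (u : Fin g → ZMod 2) (hu : ∑ i, u i * u i = 0) :
    (Fin g → ZMod 2) ≃ₗ[ZMod 2] (Fin g → ZMod 2) :=
  LinearEquiv.ofInvolutive
    (LinearMap.id + (dotL u).smulRight u)
    (by
      intro z
      simp only [LinearMap.add_apply, LinearMap.id_apply, LinearMap.smulRight_apply]
      have h1 : dotL u (z + dotL u z • u) = dotL u z := by
        rw [map_add, map_smul, dotL_apply u u, hu]
        simp
      rw [h1, add_assoc, ← two_smul (ZMod 2) (dotL u z • u)]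
      have : (2 : ZMod 2) = 0 := by decide
      rw [this, zero_smul, add_zero])

private lemma transv_apply (u : Fin g → ZMod 2) (hu : ∑ i, u i * u i = 0)
    (z : Fin g → ZMod 2) : transv u hu z = z + (∑ i, z i * u i) • u := rfl

/-- Transvections preserve the dot product. -/
private lemma transv_dot (u : Fin g → ZMod 2) (hu : ∑ i, u i * u i = 0)
    (a b : Fin g → ZMod 2) :
    ∑ i, transv u hu a i * transv u hu b i = ∑ i, a i * b i := by
  rw [transv_apply, transv_apply]
  set c := ∑ i, a i * u i with hc
  set d := ∑ i, b i * u i with hd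
  have expand : ∀ i, (a + c • u) i * (b + d • u) i
      = a i * b i + d * (a i * u i) + c * (b i * u i) + (c * d) * (u i * u i) := by
    intro i
    simp only [Pi.add_apply, Pi.smul_apply, smul_eq_mul]
    ring
  calc ∑ i, (a + c • u) i * (b + d • u) i
      = ∑ i, (a i * b i + d * (a i * u i) + c * (b i * u i) + (c * d) * (u i * u i)) := by
        exact Finset.sum_congr rfl fun i _ => expand i
    _ = (∑ i, a i * b i) + d * (∑ i, a i * u i) + c * (∑ i, b i * u i)
          + (c * d) * (∑ i, u i * u i) := by
        simp [Finset.sum_add_distrib, Finset.mul_sum]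
    _ = ∑ i, a i * b i := by
        rw [hu, ← hc, ← hd, mul_zero, add_zero, mul_comm d c]
        rw [add_assoc, ← two_mul]
        have : (2 : ZMod 2) = 0 := by decide
        rw [this, zero_mul, add_zero]

/-- Existence of a pair of coordinates giving the intermediate vector. -/
private lemma exists_pq (x x' : Fin g → ZMod 2)
    (hx1 : ∃ i, x i = 1) (hx0 : ∃ i, x i = 0)
    (hx'1 : ∃ i, x' i = 1) (hx'0 : ∃ i, x' i = 0) :
    ∃ p q, p ≠ q ∧ x p + x q = 1 ∧ x' p + x' q = 1 := by
  by_cases hB : ∃ p, x p = 1 ∧ x' p = 0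
  · by_cases hC : ∃ q, x q = 0 ∧ x' q = 1
    · obtain ⟨p, hp1, hp2⟩ := hB
      obtain ⟨q, hq1, hq2⟩ := hC
      refine ⟨p, q, ?_, ?_, ?_⟩
      · rintro rfl; rw [hp1] at hq1; exact one_ne_zero hq1
      · rw [hp1, hq1, add_zero]
      · rw [hp2, hq2, zero_add]
    · push_neg at hC
      obtain ⟨q, hq⟩ := hx0
      obtain ⟨p, hp⟩ := hx'1
      have hq' : x' q = 0 := by
        rcases zmod2_cases (x' q) with h | h
        · exact h
        · exact absurd h (hC q hq)
      have hp' : x p = 1 := by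
        rcases zmod2_cases (x p) with h | h
        · exact absurd hp (hC p h)
        · exact h
      refine ⟨p, q, ?_, ?_, ?_⟩
      · rintro rfl; rw [hp'] at hq; exact one_ne_zero hq
      · rw [hp', hq, add_zero]
      · rw [hp, hq', add_zero]
  · push_neg at hB
    obtain ⟨p, hp⟩ := hx1
    obtain ⟨q, hq⟩ := hx'0
    have hp' : x' p = 1 := by
      rcases zmod2_cases (x' p) with h | h
      · exact absurd h (hB p hp)
      · exact h
    have hq' : x q = 0 := by
      rcases zmod2_cases (x q) with h | h
      · exact h
      · exact absurd hq (hB q h)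
    refine ⟨p, q, ?_, ?_, ?_⟩
    · rintro rfl; rw [hp] at hq'; exact one_ne_zero hq'
    · rw [hp, hq', add_zero]
    · rw [hp', hq, add_zero]

end Aux

/-- For `g ≥ 1`, the orthogonal group of `W = Fin g → ZMod 2` acts transitively on
`H₀ = {x ∈ W | x ≠ 0, x ≠ e, ⟨x,e⟩ = 0}`, where `e = v₁ + ⋯ + v_g` is the all-ones
vector. -/
theorem transitive_on_H0 (g : ℕ) (hg : 1 ≤ g)
    (e : Fin g → ZMod 2) (he : e = ∑ i, Pi.single i (1 : ZMod 2))
    (x x' : Fin g → ZMod 2)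
    (hx : x ≠ 0 ∧ x ≠ e ∧ ∑ i, x i * e i = 0)
    (hx' : x' ≠ 0 ∧ x' ≠ e ∧ ∑ i, x' i * e i = 0) :
    ∃ T : (Fin g → ZMod 2) ≃ₗ[ZMod 2] (Fin g → ZMod 2),
      (∀ a b : Fin g → ZMod 2, ∑ i, T a i * T b i = ∑ i, a i * b i) ∧
      T x = x' := by
  obtain ⟨hx0, hxe, hxsum⟩ := hx
  obtain ⟨hx'0, hx'e, hx'sum⟩ := hx'
  have he1 : ∀ i, e i = 1 := by
    intro i
    rw [he]
    simp [Finset.sum_apply, Pi.single_apply]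
  -- sum conditions
  have hxs : ∑ i, x i = 0 := by
    rw [← hxsum]; exact Finset.sum_congr rfl fun i _ => by rw [he1 i, mul_one]
  have hx's : ∑ i, x' i = 0 := by
    rw [← hx'sum]; exact Finset.sum_congr rfl fun i _ => by rw [he1 i, mul_one]
  -- existence of coordinates
  have hx1 : ∃ i, x i = 1 := by
    by_contra h
    push_neg at h
    exact hx0 (funext fun i => by rcases zmod2_cases (x i) with h' | h'
                                  · exact h'
                                  · exact absurd h' (h i))
  have hxz : ∃ i, x i = 0 := by
    by_contra h
    push_neg at h
    exact hxe (funext fun i => by rw [he1 i]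
                                  rcases zmod2_cases (x i) with h' | h'
                                  · exact absurd h' (h i)
                                  · exact h')
  have hx'1 : ∃ i, x' i = 1 := by
    by_contra h
    push_neg at h
    exact hx'0 (funext fun i => by rcases zmod2_cases (x' i) with h' | h'
                                   · exact h'
                                   · exact absurd h' (h i))
  have hx'z : ∃ i, x' i = 0 := by
    by_contra h
    push_neg at h
    exact hx'e (funext fun i => by rw [he1 i]
                                   rcases zmod2_cases (x' i) with h' | h'
                                   · exact absurd h' (h i)
                                   · exact h')
  obtain ⟨p, q, hpq, hxpq, hx'pq⟩ := exists_pq x x' hx1 hxz hx'1 hx'z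
  -- the intermediate vector z
  set z : Fin g → ZMod 2 := Pi.single p 1 + Pi.single q 1 with hzdef
  have hzi : ∀ i, z i = (if i = p then 1 else 0) + (if i = q then 1 else 0) := by
    intro i
    simp [hzdef, Pi.single_apply]
  have hzs : ∑ i, z i = 0 := by
    have : ∑ i, z i = (∑ i, (if i = p then (1 : ZMod 2) else 0))
        + ∑ i, (if i = q then (1 : ZMod 2) else 0) := by
      rw [← Finset.sum_add_distrib]
      exact Finset.sum_congr rfl fun i _ => hzi i
    rw [this, Finset.sum_ite_eq' Finset.univ p fun _ => (1 : ZMod 2),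
        Finset.sum_ite_eq' Finset.univ q fun _ => (1 : ZMod 2)]
    simp
    decide
  have hdotz : ∀ w : Fin g → ZMod 2, ∑ i, w i * z i = w p + w q := by
    intro w
    have : ∀ i, w i * z i
        = (if i = p then w i else 0) + (if i = q then w i else 0) := by
      intro i
      rw [hzi i]
      split_ifs <;> ring
    rw [Finset.sum_congr rfl fun i _ => this i, Finset.sum_add_distrib,
        Finset.sum_ite_eq' Finset.univ p w, Finset.sum_ite_eq' Finset.univ q w]
    simp
  -- the two isotropic transvection vectors
  have hu1 : ∑ i, (x + z) i * (x + z) i = 0 := by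
    have : ∀ i, (x + z) i * (x + z) i = x i + z i := by
      intro i
      rw [Pi.add_apply, zmod2_sq]
    rw [Finset.sum_congr rfl fun i _ => this i, Finset.sum_add_distrib, hxs, hzs, add_zero]
  have hu2 : ∑ i, (z + x') i * (z + x') i = 0 := by
    have : ∀ i, (z + x') i * (z + x') i = z i + x' i := by
      intro i
      rw [Pi.add_apply, zmod2_sq]
    rw [Finset.sum_congr rfl fun i _ => this i, Finset.sum_add_distrib, hzs, hx's, add_zero]
  refine ⟨(transv (x + z) hu1).trans (transv (z + x') hu2), ?_, ?_⟩
  · intro a b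
    rw [LinearEquiv.trans_apply, LinearEquiv.trans_apply, transv_dot, transv_dot]
  · rw [LinearEquiv.trans_apply]
    have h1 : transv (x + z) hu1 x = z := by
      rw [transv_apply]
      have hc : ∑ i, x i * (x + z) i = 1 := by
        have : ∀ i, x i * (x + z) i = x i + x i * z i := by
          intro i
          rw [Pi.add_apply, mul_add, zmod2_sq]
        rw [Finset.sum_congr rfl fun i _ => this i, Finset.sum_add_distrib, hxs,
            hdotz x, hxpq, zero_add]
      rw [hc, one_smul, ← add_assoc, ← two_smul (ZMod 2) x]
      have h2 : (2 : ZMod 2) = 0 := by decide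
      rw [h2, zero_smul, zero_add]
    rw [h1, transv_apply]
    have hc : ∑ i, z i * (z + x') i = 1 := by
      have : ∀ i, z i * (z + x') i = z i + z i * x' i := by
        intro i
        rw [Pi.add_apply, mul_add, zmod2_sq]
      have hzx' : ∑ i, z i * x' i = 1 := by
        have comm : ∑ i, z i * x' i = ∑ i, x' i * z i :=
          Finset.sum_congr rfl fun i _ => mul_comm _ _
        rw [comm, hdotz x', hx'pq]
      rw [Finset.sum_congr rfl fun i _ => this i, Finset.sum_add_distrib, hzs, hzx',
          zero_add]
    rw [hc, one_smul, ← add_assoc, ← two_smul (ZMod 2) z]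
    have h2 : (2 : ZMod 2) = 0 := by decide
    rw [h2, zero_smul, zero_add]
end
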